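/- arXiv:1808.00517 — 2 statements merged into one kernel-verified Lean document; each statement's English description precedes it below -/
import Mathlib

section
/- Let P(λ) be an m×n matrix polynomial of grade k with m ≥ n and nrank P(λ) = r, and let L(λ) ∈ 𝕃₁(P) be a g-linearization of P(λ). Then: (1) the right minimal indices of P(λ) are ε₁ ≤ ε₂ ≤ … ≤ ε_{n−r} if and only if the right minimal indices of L(λ) are (k−1)+ε₁ ≤ (k−1)+ε₂ ≤ … ≤ (k−1)+ε_{n−r}; and (2) every right minimal basis of L(λ) is of the form {Λ_k(λ)⊗x₁(λ), …, Λ_k(λ)⊗x_{n−r}(λ)} where {x₁(λ), …, x_{n−r}(λ)} is a right minimal basis of P(λ). -/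
noncomputable section

open Polynomial Matrix

namespace GLin

variable {F : Type*} [RCLike F]

/-! ### Matrix polynomials and pencils -/

/-- The matrix polynomial `P(λ) = ∑_{i=0}^k λ^i A_i` determined by its
coefficient matrices `A_0, …, A_k` (grade `k`). -/
def matPoly {k m n : ℕ} (A : Fin (k + 1) → Matrix (Fin m) (Fin n) F) :
    Matrix (Fin m) (Fin n) F[X] :=
  Matrix.of fun r c => ∑ i : Fin (k + 1), Polynomial.C (A i r c) * Polynomial.X ^ (i : ℕ)

/-- The matrix pencil `L(λ) = λ X + Y`. -/
def pencil {ρ γ : Type*} (Xc Yc : Matrix ρ γ F) : Matrix ρ γ F[X] :=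
  Matrix.of fun i j => Polynomial.C (Xc i j) * Polynomial.X + Polynomial.C (Yc i j)

/-- `Λ_k(λ) ⊗ I_n` where `Λ_k(λ) = (λ^{k-1}, …, λ, 1)ᵀ`. -/
def Lam (F : Type*) [RCLike F] (k n : ℕ) : Matrix (Fin k × Fin n) (Fin n) F[X] :=
  Matrix.of fun p c => if p.2 = c then Polynomial.X ^ (k - 1 - (p.1 : ℕ)) else 0

/-- `Λ_k(λ)ᵀ ⊗ I_m`. -/
def LamRow (F : Type*) [RCLike F] (k m : ℕ) : Matrix (Fin m) (Fin k × Fin m) F[X] :=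
  Matrix.of fun r p => if r = p.2 then Polynomial.X ^ (k - 1 - (p.1 : ℕ)) else 0

/-- `v ⊗ P(λ)`. -/
def vkron {k m n : ℕ} (v : Fin k → F) (P : Matrix (Fin m) (Fin n) F[X]) :
    Matrix (Fin k × Fin m) (Fin n) F[X] :=
  Matrix.of fun p c => Polynomial.C (v p.1) * P p.2 c

/-- `wᵀ ⊗ P(λ)`. -/
def wkron {k m n : ℕ} (w : Fin k → F) (P : Matrix (Fin m) (Fin n) F[X]) :
    Matrix (Fin m) (Fin k × Fin n) F[X] :=
  Matrix.of fun r q => Polynomial.C (w q.1) * P r q.2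

/-- The defining identity of `𝕃₁(P)`: `L(λ)(Λ_k(λ) ⊗ I_n) = v ⊗ P(λ)`. -/
def RightAnsatz {k m n : ℕ} (P : Matrix (Fin m) (Fin n) F[X])
    (L : Matrix (Fin k × Fin m) (Fin k × Fin n) F[X]) (v : Fin k → F) : Prop :=
  L * Lam F k n = vkron v P

/-- The defining identity of `𝕃₂(P)`: `(Λ_k(λ)ᵀ ⊗ I_m) L(λ) = wᵀ ⊗ P(λ)`. -/
def LeftAnsatz {k m n : ℕ} (P : Matrix (Fin m) (Fin n) F[X])
    (L : Matrix (Fin k × Fin m) (Fin k × Fin n) F[X]) (w : Fin k → F) : Prop :=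
  LamRow F k m * L = wkron w P

/-- The vector `α e₁ ∈ F^k`. -/
def e1 {k : ℕ} (α : F) : Fin k → F := fun i => if (i : ℕ) = 0 then α else 0

/-- `M ⊗ I_m`. -/
def kronId {k m : ℕ} (M : Matrix (Fin k) (Fin k) F) :
    Matrix (Fin k × Fin m) (Fin k × Fin m) F :=
  Matrix.of fun p q => if p.2 = q.2 then M p.1 q.1 else 0

/-! ### (strong) g-linearizations -/

/-- `diag(P(λ), I_{k-1} ⊗ I_{m,n})`. -/
def glinTarget {k m n : ℕ} (P : Matrix (Fin m) (Fin n) F[X]) :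
    Matrix (Fin k × Fin m) (Fin k × Fin n) F[X] :=
  Matrix.of fun p q =>
    if p.1 = q.1 then
      (if (p.1 : ℕ) = 0 then P p.2 q.2 else if (p.2 : ℕ) = (q.2 : ℕ) then 1 else 0)
    else 0

/-- A `km × kn` pencil (or matrix polynomial) `L` is a g-linearization of the `m × n`
matrix polynomial `P` of grade `k` if `E(λ) L(λ) G(λ) = diag(P(λ), I_{k-1} ⊗ I_{m,n})`
for unimodular `E`, `G`. -/
def IsGLin {k m n : ℕ} (P : Matrix (Fin m) (Fin n) F[X])
    (L : Matrix (Fin k × Fin m) (Fin k × Fin n) F[X]) : Prop :=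
  ∃ (E : Matrix (Fin k × Fin m) (Fin k × Fin m) F[X])
    (G : Matrix (Fin k × Fin n) (Fin k × Fin n) F[X]),
      IsUnit E.det ∧ IsUnit G.det ∧ E * L * G = glinTarget P

/-- grade-`N` reversal `rev_N P(λ) = λ^N P(1/λ)`, entrywise. -/
def revMat {ρ γ : Type*} (N : ℕ) (P : Matrix ρ γ F[X]) : Matrix ρ γ F[X] :=
  P.map fun p => Polynomial.reflect N p

/-- Strong g-linearization of the grade-`k` matrix polynomial with coefficients `A`. -/
def IsStrongGLin {k m n : ℕ} (A : Fin (k + 1) → Matrix (Fin m) (Fin n) F)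
    (L : Matrix (Fin k × Fin m) (Fin k × Fin n) F[X]) : Prop :=
  IsGLin (matPoly A) L ∧ IsGLin (revMat k (matPoly A)) (revMat 1 L)

/-! ### linearizations (rectangular, of size `(m+s) × (n+s)`) -/

/-- A matrix polynomial `L` (indexed by arbitrary finite types of cardinalities
`m + s` and `n + s`) is a linearization of `P` if, after identifying the index types
with `Fin m ⊕ Fin s` and `Fin n ⊕ Fin s`, one has `E(λ) L(λ) G(λ) = diag(P(λ), I_s)`
for unimodular `E`, `G`. -/
def IsLin {m n : ℕ} (s : ℕ) (P : Matrix (Fin m) (Fin n) F[X])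
    {ρ γ : Type*} [Fintype ρ] [DecidableEq ρ] [Fintype γ] [DecidableEq γ]
    (L : Matrix ρ γ F[X]) : Prop :=
  ∃ (er : ρ ≃ (Fin m ⊕ Fin s)) (ec : γ ≃ (Fin n ⊕ Fin s))
    (E : Matrix (Fin m ⊕ Fin s) (Fin m ⊕ Fin s) F[X])
    (G : Matrix (Fin n ⊕ Fin s) (Fin n ⊕ Fin s) F[X]),
      IsUnit E.det ∧ IsUnit G.det ∧
        E * Matrix.reindex er ec L * G = Matrix.fromBlocks P 0 0 1

/-- Strong linearization of the grade-`k` matrix polynomial with coefficients `A`. -/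
def IsStrongLin {k m n : ℕ} (s : ℕ) (A : Fin (k + 1) → Matrix (Fin m) (Fin n) F)
    {ρ γ : Type*} [Fintype ρ] [DecidableEq ρ] [Fintype γ] [DecidableEq γ]
    (L : Matrix ρ γ F[X]) : Prop :=
  IsLin s (matPoly A) L ∧ IsLin s (revMat k (matPoly A)) (revMat 1 L)

/-! ### shifted sums -/

/-- Column shifted sum `X ⊞→ Y`. -/
def colShiftSum {k m n : ℕ} (Xc Yc : Matrix (Fin k × Fin m) (Fin k × Fin n) F) :
    Matrix (Fin k × Fin m) (Fin (k + 1) × Fin n) F :=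
  Matrix.of fun p q =>
    (if h : (q.1 : ℕ) < k then Xc p (⟨(q.1 : ℕ), h⟩, q.2) else 0) +
    (if h : 0 < (q.1 : ℕ) then
        Yc p (⟨(q.1 : ℕ) - 1, by have := q.1.isLt; omega⟩, q.2)
      else 0)

/-- Row shifted sum `X ⊞↓ Y`. -/
def rowShiftSum {k m n : ℕ} (Xc Yc : Matrix (Fin k × Fin m) (Fin k × Fin n) F) :
    Matrix (Fin (k + 1) × Fin m) (Fin k × Fin n) F :=
  Matrix.of fun p q =>
    (if h : (p.1 : ℕ) < k then Xc (⟨(p.1 : ℕ), h⟩, p.2) q else 0) +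
    (if h : 0 < (p.1 : ℕ) then
        Yc (⟨(p.1 : ℕ) - 1, by have := p.1.isLt; omega⟩, p.2) q
      else 0)

/-! ### the parametrization of `𝕃₁(P)` and `𝕃₂(P)` -/

/-- `X = [v ⊗ A_k ∣ -W]`. -/
def L1X {k m n : ℕ} (A : Fin (k + 1) → Matrix (Fin m) (Fin n) F) (v : Fin k → F)
    (W : Matrix (Fin k × Fin m) (Fin (k - 1) × Fin n) F) :
    Matrix (Fin k × Fin m) (Fin k × Fin n) F :=
  Matrix.of fun p q =>
    if h : (q.1 : ℕ) = 0 then v p.1 * A (Fin.last k) p.2 q.2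
    else -W p (⟨(q.1 : ℕ) - 1, by have := q.1.isLt; omega⟩, q.2)

/-- `Y = [W + v ⊗ [A_{k-1} ⋯ A_1] ∣ v ⊗ A_0]`. -/
def L1Y {k m n : ℕ} (A : Fin (k + 1) → Matrix (Fin m) (Fin n) F) (v : Fin k → F)
    (W : Matrix (Fin k × Fin m) (Fin (k - 1) × Fin n) F) :
    Matrix (Fin k × Fin m) (Fin k × Fin n) F :=
  Matrix.of fun p q =>
    if h : (q.1 : ℕ) < k - 1 then
      W p (⟨(q.1 : ℕ), h⟩, q.2) + v p.1 * A (⟨k - 1 - (q.1 : ℕ), by omega⟩) p.2 q.2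
    else v p.1 * A 0 p.2 q.2

/-- `X = [wᵀ ⊗ A_k ; -Ŵ]`. -/
def L2X {k m n : ℕ} (A : Fin (k + 1) → Matrix (Fin m) (Fin n) F) (w : Fin k → F)
    (W : Matrix (Fin (k - 1) × Fin m) (Fin k × Fin n) F) :
    Matrix (Fin k × Fin m) (Fin k × Fin n) F :=
  Matrix.of fun p q =>
    if h : (p.1 : ℕ) = 0 then w q.1 * A (Fin.last k) p.2 q.2
    else -W (⟨(p.1 : ℕ) - 1, by have := p.1.isLt; omega⟩, p.2) q

/-- `Y = [Ŵ + wᵀ ⊗ [A_{k-1}ᵀ ⋯ A_1ᵀ]ᵀ ; wᵀ ⊗ A_0]`. -/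
def L2Y {k m n : ℕ} (A : Fin (k + 1) → Matrix (Fin m) (Fin n) F) (w : Fin k → F)
    (W : Matrix (Fin (k - 1) × Fin m) (Fin k × Fin n) F) :
    Matrix (Fin k × Fin m) (Fin k × Fin n) F :=
  Matrix.of fun p q =>
    if h : (p.1 : ℕ) < k - 1 then
      W (⟨(p.1 : ℕ), h⟩, p.2) q + w q.1 * A (⟨k - 1 - (p.1 : ℕ), by omega⟩) p.2 q.2
    else w q.1 * A 0 p.2 q.2

/-! ### block structure and `Z`-matrices -/

/-- Assemble a `km × kn` matrix from blocks with row split `m + (k-1)m` and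
column split `n + (k-1)n`. -/
def blk {k m n : ℕ} (TL : Matrix (Fin m) (Fin n) F)
    (TR : Matrix (Fin m) (Fin (k - 1) × Fin n) F)
    (BL : Matrix (Fin (k - 1) × Fin m) (Fin n) F)
    (BR : Matrix (Fin (k - 1) × Fin m) (Fin (k - 1) × Fin n) F) :
    Matrix (Fin k × Fin m) (Fin k × Fin n) F :=
  Matrix.of fun p q =>
    if hp : (p.1 : ℕ) = 0 then
      if hq : (q.1 : ℕ) = 0 then TL p.2 q.2
      else TR p.2 (⟨(q.1 : ℕ) - 1, by have := q.1.isLt; omega⟩, q.2)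
    else
      if hq : (q.1 : ℕ) = 0 then
        BL (⟨(p.1 : ℕ) - 1, by have := p.1.isLt; omega⟩, p.2) q.2
      else
        BR (⟨(p.1 : ℕ) - 1, by have := p.1.isLt; omega⟩, p.2)
          (⟨(q.1 : ℕ) - 1, by have := q.1.isLt; omega⟩, q.2)

/-- Assemble `[[Y₁₁, T],[Z, 0]]`, row split `m + (k-1)m`, column split `(k-1)n + n`. -/
def blkY1 {k m n : ℕ} (Y11 : Matrix (Fin m) (Fin (k - 1) × Fin n) F)
    (T : Matrix (Fin m) (Fin n) F)
    (Z : Matrix (Fin (k - 1) × Fin m) (Fin (k - 1) × Fin n) F) :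
    Matrix (Fin k × Fin m) (Fin k × Fin n) F :=
  Matrix.of fun p q =>
    if hp : (p.1 : ℕ) = 0 then
      if hq : (q.1 : ℕ) < k - 1 then Y11 p.2 (⟨(q.1 : ℕ), hq⟩, q.2) else T p.2 q.2
    else
      if hq : (q.1 : ℕ) < k - 1 then
        Z (⟨(p.1 : ℕ) - 1, by have := p.1.isLt; omega⟩, p.2) (⟨(q.1 : ℕ), hq⟩, q.2)
      else 0

/-- Assemble `[[Y₁₁, Z],[T, 0]]`, row split `(k-1)m + m`, column split `n + (k-1)n`. -/
def blkY2 {k m n : ℕ} (Y11 : Matrix (Fin (k - 1) × Fin m) (Fin n) F)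
    (Z : Matrix (Fin (k - 1) × Fin m) (Fin (k - 1) × Fin n) F)
    (T : Matrix (Fin m) (Fin n) F) :
    Matrix (Fin k × Fin m) (Fin k × Fin n) F :=
  Matrix.of fun p q =>
    if hp : (p.1 : ℕ) < k - 1 then
      if hq : (q.1 : ℕ) = 0 then Y11 (⟨(p.1 : ℕ), hp⟩, p.2) q.2
      else Z (⟨(p.1 : ℕ), hp⟩, p.2) (⟨(q.1 : ℕ) - 1, by have := q.1.isLt; omega⟩, q.2)
    else
      if hq : (q.1 : ℕ) = 0 then T p.2 q.2 else 0

/-- The `Z`-matrix of `L = λX + Y ∈ 𝕃₁(P)` with respect to `M`: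
the lower-left `(k-1)m × (k-1)n` block of `(M ⊗ I_m) Y`. -/
def Zmat1 {k m n : ℕ} (M : Matrix (Fin k) (Fin k) F)
    (Yc : Matrix (Fin k × Fin m) (Fin k × Fin n) F) :
    Matrix (Fin (k - 1) × Fin m) (Fin (k - 1) × Fin n) F :=
  Matrix.of fun p q =>
    (kronId M * Yc : Matrix (Fin k × Fin m) (Fin k × Fin n) F)
      (⟨(p.1 : ℕ) + 1, by have := p.1.isLt; omega⟩, p.2)
      (⟨(q.1 : ℕ), by have := q.1.isLt; omega⟩, q.2)

/-- The `Z`-matrix of `L = λX + Y ∈ 𝕃₂(P)` with respect to `M̂`: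
the upper-right `(k-1)m × (k-1)n` block of `Y (M̂ᵀ ⊗ I_n)`. -/
def Zmat2 {k m n : ℕ} (M : Matrix (Fin k) (Fin k) F)
    (Yc : Matrix (Fin k × Fin m) (Fin k × Fin n) F) :
    Matrix (Fin (k - 1) × Fin m) (Fin (k - 1) × Fin n) F :=
  Matrix.of fun p q =>
    (Yc * kronId Mᵀ : Matrix (Fin k × Fin m) (Fin k × Fin n) F)
      (⟨(p.1 : ℕ), by have := p.1.isLt; omega⟩, p.2)
      (⟨(q.1 : ℕ) + 1, by have := q.1.isLt; omega⟩, q.2)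

/-- `L = λX + Y ∈ 𝕃₁(P)` with right ansatz vector `v` has full `Z`-rank. -/
def FullZrank1 {k m n : ℕ} (Yc : Matrix (Fin k × Fin m) (Fin k × Fin n) F)
    (v : Fin k → F) : Prop :=
  ∃ (M : Matrix (Fin k) (Fin k) F) (α : F),
    IsUnit M ∧ α ≠ 0 ∧ M.mulVec v = e1 α ∧ (Zmat1 M Yc).rank = (k - 1) * n

/-- `L = λX + Y ∈ 𝕃₂(P)` with left ansatz vector `w` has full `Z`-rank. -/
def FullZrank2 {k m n : ℕ} (Yc : Matrix (Fin k × Fin m) (Fin k × Fin n) F)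
    (w : Fin k → F) : Prop :=
  ∃ (M : Matrix (Fin k) (Fin k) F) (α : F),
    IsUnit M ∧ α ≠ 0 ∧ M.mulVec w = e1 α ∧ (Zmat2 M Yc).rank = (k - 1) * m

/-! ### null spaces, minimal bases and minimal indices over `F(λ)` -/

/-- A matrix polynomial viewed as a matrix over the field of rational functions. -/
def matRF {ρ γ : Type*} (P : Matrix ρ γ F[X]) : Matrix ρ γ (RatFunc F) :=
  P.map (algebraMap F[X] (RatFunc F))

/-- The right null space `N_r(P) = {x(λ) : P(λ) x(λ) ≡ 0}` over `F(λ)`. -/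
def Nr {ρ γ : Type*} [Fintype γ] (P : Matrix ρ γ F[X]) :
    Submodule (RatFunc F) (γ → RatFunc F) :=
  LinearMap.ker (Matrix.mulVecLin (matRF P))

/-- The left null space `N_l(P) = {y(λ) : y(λ)ᵀ P(λ) ≡ 0}` over `F(λ)`. -/
def Nl {ρ γ : Type*} [Fintype ρ] (P : Matrix ρ γ F[X]) :
    Submodule (RatFunc F) (ρ → RatFunc F) :=
  Nr Pᵀ

/-- The normal rank of a matrix polynomial: its rank over `F(λ)`. -/
def nrank {ρ γ : Type*} [Fintype γ] (P : Matrix ρ γ F[X]) : ℕ :=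
  (matRF P).rank

/-- The rational vector determined by a vector polynomial. -/
def polyVec {γ : Type*} (x : γ → F[X]) : γ → RatFunc F :=
  fun i => algebraMap F[X] (RatFunc F) (x i)

/-- A rational vector is a vector polynomial if all its entries are polynomials. -/
def IsVecPoly {γ : Type*} (x : γ → RatFunc F) : Prop :=
  ∃ p : γ → F[X], x = polyVec p

/-- The degree of a vector polynomial: the greatest degree of its components. -/
def polyVecDeg {γ : Type*} [Fintype γ] (x : γ → F[X]) : ℕ :=
  Finset.univ.sup fun i => (x i).natDegree

/-- A polynomial basis of the subspace `V` of `F(λ)^γ`. -/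
def IsPolyBasis {γ ι : Type*} [Fintype γ]
    (V : Submodule (RatFunc F) (γ → RatFunc F)) (b : ι → γ → F[X]) : Prop :=
  LinearIndependent (RatFunc F) (fun i => polyVec (b i)) ∧
    Submodule.span (RatFunc F) (Set.range fun i => polyVec (b i)) = V

/-- A minimal basis of `V`: a polynomial basis of least order (sum of degrees). -/
def IsMinimalBasis {γ ι : Type*} [Fintype γ] [Fintype ι]
    (V : Submodule (RatFunc F) (γ → RatFunc F)) (b : ι → γ → F[X]) : Prop :=
  IsPolyBasis V b ∧
    ∀ (d : ℕ) (b' : Fin d → γ → F[X]), IsPolyBasis V b' →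
      ∑ i, polyVecDeg (b i) ≤ ∑ i, polyVecDeg (b' i)

/-- `ε` is the list of minimal indices of `V`: some minimal basis of `V` has
`ε` as its list of degrees. -/
def HasMinIndices {γ : Type*} [Fintype γ]
    (V : Submodule (RatFunc F) (γ → RatFunc F)) {d : ℕ} (ε : Fin d → ℕ) : Prop :=
  ∃ b : Fin d → γ → F[X], IsMinimalBasis V b ∧ ∀ i, polyVecDeg (b i) = ε i

/-- `Λ_k(λ) ⊗ x(λ)`. -/
def lamTensor {n : ℕ} (k : ℕ) (x : Fin n → RatFunc F) : Fin k × Fin n → RatFunc F :=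
  fun p => algebraMap F[X] (RatFunc F) (Polynomial.X ^ (k - 1 - (p.1 : ℕ))) * x p.2

/-- The matrix `vᵀ ⊗ I_m` over `F(λ)`; `𝓛_v(y) = (vproj v).mulVec y`. -/
def vproj {k m : ℕ} (v : Fin k → F) : Matrix (Fin m) (Fin k × Fin m) (RatFunc F) :=
  Matrix.of fun r p =>
    if r = p.2 then algebraMap F[X] (RatFunc F) (Polynomial.C (v p.1)) else 0

/-- `(vᵀ ⊗ I_m) y` at the level of vector polynomials. -/
def LvPoly {k m : ℕ} (v : Fin k → F) (y : Fin k × Fin m → F[X]) : Fin m → F[X] :=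
  fun r => ∑ i : Fin k, Polynomial.C (v i) * y (i, r)

/-- The rational subspace spanned by the rows of a matrix polynomial. -/
def rowSpan {ρ γ : Type*} [Fintype γ] (B : Matrix ρ γ F[X]) :
    Submodule (RatFunc F) (γ → RatFunc F) :=
  Submodule.span (RatFunc F) (Set.range fun i => polyVec (B i))

/-- A matrix polynomial is a minimal basis if its rows form a minimal basis of the
rational subspace they span. -/
def IsMinimalBasisMat {ρ γ : Type*} [Fintype ρ] [Fintype γ] (B : Matrix ρ γ F[X]) : Prop :=
  IsMinimalBasis (rowSpan B) (fun i => B i)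

/-- Dual minimal bases: `B ∈ F[λ]^{n₁×n}`, `C ∈ F[λ]^{n₂×n}` minimal bases with
`n₁ + n₂ = n` and `B Cᵀ = 0`. -/
def DualMinBases {ρ ρ' γ : Type*} [Fintype ρ] [Fintype ρ'] [Fintype γ]
    (B : Matrix ρ γ F[X]) (Cm : Matrix ρ' γ F[X]) : Prop :=
  IsMinimalBasisMat B ∧ IsMinimalBasisMat Cm ∧
    Fintype.card ρ + Fintype.card ρ' = Fintype.card γ ∧ B * Cmᵀ = 0

/-! ### norms, singular values -/

/-- Square of the Frobenius norm of a constant matrix. -/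
def frobSq {ρ γ : Type*} [Fintype ρ] [Fintype γ] (Ac : Matrix ρ γ F) : ℝ :=
  ∑ i, ∑ j, ‖Ac i j‖ ^ 2

/-- `‖λX + Y‖_F = sqrt(‖X‖_F² + ‖Y‖_F²)`. -/
def penFrob {ρ γ : Type*} [Fintype ρ] [Fintype γ] (Xc Yc : Matrix ρ γ F) : ℝ :=
  Real.sqrt (frobSq Xc + frobSq Yc)

/-- `‖P‖_F = sqrt(∑ ‖A_i‖_F²)` for `P(λ) = ∑ λ^i A_i`. -/
def famFrob {k m n : ℕ} (A : Fin (k + 1) → Matrix (Fin m) (Fin n) F) : ℝ :=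
  Real.sqrt (∑ i, frobSq (A i))

/-- `‖P‖_F` for a matrix polynomial of grade `g`. -/
def mpolyFrob {ρ γ : Type*} [Fintype ρ] [Fintype γ] (g : ℕ) (P : Matrix ρ γ F[X]) : ℝ :=
  Real.sqrt (∑ i, ∑ j, ∑ d ∈ Finset.range (g + 1), ‖(P i j).coeff d‖ ^ 2)

/-- Square of the Euclidean norm of a vector. -/
def vecNormSq {ι : Type*} [Fintype ι] (x : ι → F) : ℝ := ∑ i, ‖x i‖ ^ 2

/-- The smallest singular value of a matrix. -/
def sigmaMin {ρ γ : Type*} [Fintype ρ] [Fintype γ] (Ac : Matrix ρ γ F) : ℝ :=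
  if Fintype.card γ ≤ Fintype.card ρ then
    sInf {r : ℝ | ∃ x : γ → F, vecNormSq x = 1 ∧ r = Real.sqrt (vecNormSq (Ac.mulVec x))}
  else
    sInf {r : ℝ | ∃ y : ρ → F, vecNormSq y = 1 ∧ r = Real.sqrt (vecNormSq (Acᴴ.mulVec y))}

/-- The spectral norm (2-norm) of a matrix. -/
def norm2 {ρ γ : Type*} [Fintype ρ] [Fintype γ] (Ac : Matrix ρ γ F) : ℝ :=
  sSup {r : ℝ | ∃ x : γ → F, vecNormSq x = 1 ∧ r = Real.sqrt (vecNormSq (Ac.mulVec x))}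

/-- `κ₂(D) = ‖D‖₂ ‖D⁻¹‖₂`. -/
def cond2 {ρ : Type*} [Fintype ρ] [DecidableEq ρ] (Dc : Matrix ρ ρ F) : ℝ :=
  norm2 Dc * norm2 Dc⁻¹

/-! ### pencils used in the backward error analysis -/

/-- `B(λ) = λ [0 ∣ -R̃] + [R̃ ∣ 0]`, i.e. `R̃ (H_{k-1}(λ) ⊗ I_n)` up to sign conventions. -/
def Bpencil {k n : ℕ} (R : Matrix (Fin (k - 1) × Fin n) (Fin (k - 1) × Fin n) F) :
    Matrix (Fin (k - 1) × Fin n) (Fin k × Fin n) F[X] :=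
  Matrix.of fun p q =>
    (if h : (q.1 : ℕ) < k - 1 then Polynomial.C (R p (⟨(q.1 : ℕ), h⟩, q.2)) else 0) +
    (if h : 0 < (q.1 : ℕ) then
        Polynomial.X *
          Polynomial.C (-R p (⟨(q.1 : ℕ) - 1, by have := q.1.isLt; omega⟩, q.2))
      else 0)

/-- The coefficient of `λ` in `H_{k-1}(λ) ⊗ I_n`. -/
def Hlam (F : Type*) [RCLike F] (k n : ℕ) :
    Matrix (Fin (k - 1) × Fin n) (Fin k × Fin n) F :=
  Matrix.of fun p q => if p.2 = q.2 ∧ (q.1 : ℕ) = (p.1 : ℕ) + 1 then 1 else 0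

/-- The constant coefficient of `H_{k-1}(λ) ⊗ I_n`. -/
def Hconst (F : Type*) [RCLike F] (k n : ℕ) :
    Matrix (Fin (k - 1) × Fin n) (Fin k × Fin n) F :=
  Matrix.of fun p q => if p.2 = q.2 ∧ (q.1 : ℕ) = (p.1 : ℕ) then -1 else 0

/-- The convolution matrix `C_j(λ Xc + Yc)` of a pencil, with `j+1` block columns. -/
def convPencil {ρ γ : Type*} (Xc Yc : Matrix ρ γ F) (j : ℕ) :
    Matrix (Fin (j + 2) × ρ) (Fin (j + 1) × γ) F :=
  Matrix.of fun r c =>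
    if (r.1 : ℕ) = (c.1 : ℕ) then Xc r.2 c.2
    else if (r.1 : ℕ) = (c.1 : ℕ) + 1 then Yc r.2 c.2 else 0

/-- λ-coefficient of the trimmed pencil `L̂_t(λ)`:
`[[α A_k, X₁₂],[0, -R̃]]` with row split `m + (k-1)n`. -/
def LtX {k m n : ℕ} (α : F) (Ak : Matrix (Fin m) (Fin n) F)
    (X12 : Matrix (Fin m) (Fin (k - 1) × Fin n) F)
    (R : Matrix (Fin (k - 1) × Fin n) (Fin (k - 1) × Fin n) F) :
    Matrix (Fin m ⊕ (Fin (k - 1) × Fin n)) (Fin k × Fin n) F :=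
  Matrix.of fun s q =>
    Sum.elim
      (fun r => if h : (q.1 : ℕ) = 0 then α * Ak r q.2
        else X12 r (⟨(q.1 : ℕ) - 1, by have := q.1.isLt; omega⟩, q.2))
      (fun p => if h : (q.1 : ℕ) = 0 then 0
        else -R p (⟨(q.1 : ℕ) - 1, by have := q.1.isLt; omega⟩, q.2)) s

/-- Constant coefficient of the trimmed pencil `L̂_t(λ)`:
`[[Y₁₁, α A₀],[R̃, 0]]` with row split `m + (k-1)n`. -/
def LtY {k m n : ℕ} (α : F) (A0 : Matrix (Fin m) (Fin n) F)
    (Y11 : Matrix (Fin m) (Fin (k - 1) × Fin n) F)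
    (R : Matrix (Fin (k - 1) × Fin n) (Fin (k - 1) × Fin n) F) :
    Matrix (Fin m ⊕ (Fin (k - 1) × Fin n)) (Fin k × Fin n) F :=
  Matrix.of fun s q =>
    Sum.elim
      (fun r => if h : (q.1 : ℕ) < k - 1 then Y11 r (⟨(q.1 : ℕ), h⟩, q.2)
        else α * A0 r q.2)
      (fun p => if h : (q.1 : ℕ) < k - 1 then R p (⟨(q.1 : ℕ), h⟩, q.2) else 0) s

/-! ### trimming -/

/-- The rows `[0 ∣ Q₂*] (M ⊗ I_m)`. -/
def bottomRows {k m n c : ℕ} (M : Matrix (Fin k) (Fin k) F)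
    (Q : Matrix (Fin (k - 1) × Fin m) ((Fin (k - 1) × Fin n) ⊕ Fin c) F) :
    Matrix (Fin c) (Fin k × Fin m) F :=
  (Matrix.of fun (j : Fin c) (p : Fin k × Fin m) =>
      if h : (p.1 : ℕ) = 0 then 0
      else star (Q (⟨(p.1 : ℕ) - 1, by have := p.1.isLt; omega⟩, p.2) (Sum.inr j)))
    * kronId M

/-- The square matrix `[D ; [0 ∣ Q₂*](M ⊗ I_m)]` whose invertibility makes `D` admissible. -/
def trimAux {k m n c : ℕ} (M : Matrix (Fin k) (Fin k) F)
    (Q : Matrix (Fin (k - 1) × Fin m) ((Fin (k - 1) × Fin n) ⊕ Fin c) F)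
    (D : Matrix (Fin m ⊕ (Fin (k - 1) × Fin n)) (Fin k × Fin m) F) :
    Matrix ((Fin m ⊕ (Fin (k - 1) × Fin n)) ⊕ Fin c) (Fin k × Fin m) F :=
  Matrix.of (Sum.elim (fun i j => D i j) (fun i j => bottomRows M Q i j))

/-- The columns `(M̂ᵀ ⊗ I_n) [0 ; Q₂]`. -/
def rightCols {k m n c : ℕ} (M : Matrix (Fin k) (Fin k) F)
    (Q : Matrix (Fin (k - 1) × Fin n) ((Fin (k - 1) × Fin m) ⊕ Fin c) F) :
    Matrix (Fin k × Fin n) (Fin c) F :=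
  kronId Mᵀ *
    (Matrix.of fun (q : Fin k × Fin n) (j : Fin c) =>
      if h : (q.1 : ℕ) = 0 then 0
      else Q (⟨(q.1 : ℕ) - 1, by have := q.1.isLt; omega⟩, q.2) (Sum.inr j))

/-- The square matrix `[D̂ ∣ (M̂ᵀ ⊗ I_n)[0 ; Q₂]]` whose invertibility makes `D̂` admissible. -/
def trimAux2 {k m n c : ℕ} (M : Matrix (Fin k) (Fin k) F)
    (Q : Matrix (Fin (k - 1) × Fin n) ((Fin (k - 1) × Fin m) ⊕ Fin c) F)
    (D : Matrix (Fin k × Fin n) (Fin n ⊕ (Fin (k - 1) × Fin m)) F) :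
    Matrix (Fin k × Fin n) ((Fin n ⊕ (Fin (k - 1) × Fin m)) ⊕ Fin c) F :=
  Matrix.of fun q s => Sum.elim (fun t => D q t) (fun j => rightCols M Q q j) s


/-! ### Auxiliary machinery for Statement 7 -/

section Aux

variable {F : Type*} [RCLike F]

private lemma amInj : Function.Injective (algebraMap F[X] (RatFunc F)) :=
  RatFunc.algebraMap_injective F

private lemma matRF_mul {a b c : Type*} [Fintype b] (M : Matrix a b F[X])
    (N : Matrix b c F[X]) : matRF (M * N) = matRF M * matRF N :=
  Matrix.map_mul

private lemma isUnit_matRF_det {a : Type*} [Fintype a] [DecidableEq a]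
    {M : Matrix a a F[X]} (h : IsUnit M.det) : IsUnit (matRF M).det := by
  have hd : (matRF M).det = algebraMap F[X] (RatFunc F) M.det :=
    ((algebraMap F[X] (RatFunc F)).map_det M).symm
  rw [hd]; exact h.map _

/-- The linear map `x ↦ Λ_k(λ) ⊗ x` over `F(λ)`. -/
private def lamT (k n : ℕ) :
    (Fin n → RatFunc F) →ₗ[RatFunc F] (Fin k × Fin n → RatFunc F) :=
  (matRF (Lam F k n)).mulVecLin

private lemma lamT_apply {k n : ℕ} (x : Fin n → RatFunc F) (p : Fin k × Fin n) :
    lamT k n x p = algebraMap F[X] (RatFunc F) (X ^ (k - 1 - (p.1 : ℕ))) * x p.2 := by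
  classical
  show ((matRF (Lam F k n)).mulVec x) p = _
  rw [Matrix.mulVec, dotProduct, Finset.sum_eq_single p.2]
  · simp [matRF, Lam]
  · intro b _ hb
    simp only [matRF, Matrix.map_apply, Lam, Matrix.of_apply, if_neg (Ne.symm hb),
      map_zero, zero_mul]
  · simp

private lemma lamT_injective {k n : ℕ} (hk : 0 < k) :
    Function.Injective (lamT (F := F) k n) := by
  intro a b hab
  funext j
  have h := congrFun hab (⟨k - 1, Nat.sub_lt hk one_pos⟩, j)
  rw [lamT_apply, lamT_apply] at h
  simpa using h

private lemma polyVec_lam {k n : ℕ} (x : Fin n → F[X]) :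
    polyVec (fun p : Fin k × Fin n => X ^ (k - 1 - (p.1 : ℕ)) * x p.2) =
      lamT k n (polyVec x) := by
  funext p
  rw [lamT_apply]
  simp [polyVec]


private lemma vkron_mulVec_eq_zero {k m n : ℕ} (v : Fin k → F)
    (P : Matrix (Fin m) (Fin n) F[X]) {x : Fin n → RatFunc F}
    (hx : (matRF P).mulVec x = 0) :
    (matRF (vkron v P)).mulVec x = 0 := by
  funext p
  have hp2 := congrFun hx p.2
  simp only [Matrix.mulVec, dotProduct, matRF, Matrix.map_apply, Pi.zero_apply] at hp2 ⊢
  have : ∀ c : Fin n, algebraMap F[X] (RatFunc F) (vkron v P p c) * x c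
      = algebraMap F[X] (RatFunc F) (C (v p.1))
        * (algebraMap F[X] (RatFunc F) (P p.2 c) * x c) := by
    intro c
    rw [show vkron v P p c = C (v p.1) * P p.2 c from rfl, _root_.map_mul, mul_assoc]
  rw [Finset.sum_congr rfl fun c _ => this c, ← Finset.mul_sum, hp2, mul_zero]

private lemma mem_Nr_map {k m n : ℕ} {P : Matrix (Fin m) (Fin n) F[X]}
    {L : Matrix (Fin k × Fin m) (Fin k × Fin n) F[X]} {v : Fin k → F}
    (hv : RightAnsatz P L v) :
    Submodule.map (lamT k n) (Nr P) ≤ Nr L := by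
  rintro _ ⟨x, hx, rfl⟩
  have hx' : (matRF P).mulVec x = 0 := hx
  show (matRF L).mulVecLin (lamT k n x) = 0
  have hmul : matRF L * matRF (Lam F k n) = matRF (vkron v P) := by
    rw [← matRF_mul, show L * Lam F k n = vkron v P from hv]
  have h1 : (matRF L).mulVecLin (lamT k n x)
      = (matRF L * matRF (Lam F k n)).mulVec x := by
    rw [Matrix.mulVecLin_apply]
    exact Matrix.mulVec_mulVec x (matRF L) (matRF (Lam F k n))
  rw [h1, hmul]
  exact vkron_mulVec_eq_zero v P hx'

private lemma glinTarget_mulVec {k m n : ℕ} (P : Matrix (Fin m) (Fin n) F[X])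
    (z : Fin k × Fin n → RatFunc F) (p : Fin k × Fin m) :
    (matRF (glinTarget P)).mulVec z p =
      if (p.1 : ℕ) = 0 then
        ∑ c, algebraMap F[X] (RatFunc F) (P p.2 c) * z (p.1, c)
      else if h : (p.2 : ℕ) < n then z (p.1, ⟨(p.2 : ℕ), h⟩) else 0 := by
  classical
  have h0 : (matRF (glinTarget P)).mulVec z p
      = ∑ q1 : Fin k, ∑ q2 : Fin n,
          algebraMap F[X] (RatFunc F) (glinTarget (k := k) P p (q1, q2)) * z (q1, q2) := by
    rw [Matrix.mulVec, dotProduct, Fintype.sum_prod_type]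
    rfl
  rw [h0]
  have h1 : (∑ q1 : Fin k, ∑ q2 : Fin n,
        algebraMap F[X] (RatFunc F) (glinTarget (k := k) P p (q1, q2)) * z (q1, q2))
      = ∑ q2 : Fin n,
          algebraMap F[X] (RatFunc F) (glinTarget (k := k) P p (p.1, q2)) * z (p.1, q2) := by
    refine Finset.sum_eq_single p.1
      (fun b _ hb => Finset.sum_eq_zero fun c _ => ?_)
      (fun hmem => absurd (Finset.mem_univ _) hmem)
    simp [glinTarget, Ne.symm hb]
  rw [h1]
  by_cases hp : (p.1 : ℕ) = 0
  · rw [if_pos hp]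
    refine Finset.sum_congr rfl fun c _ => ?_
    simp [glinTarget, hp]
  · rw [if_neg hp]
    by_cases h : (p.2 : ℕ) < n
    · rw [dif_pos h]
      have h2 : (∑ q2 : Fin n,
            algebraMap F[X] (RatFunc F) (glinTarget (k := k) P p (p.1, q2)) * z (p.1, q2))
          = algebraMap F[X] (RatFunc F)
              (glinTarget (k := k) P p (p.1, ⟨(p.2 : ℕ), h⟩))
              * z (p.1, ⟨(p.2 : ℕ), h⟩) := by
        refine Finset.sum_eq_single (⟨(p.2 : ℕ), h⟩ : Fin n) (fun b _ hb => ?_)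
          (fun hmem => absurd (Finset.mem_univ _) hmem)
        have hne : (p.2 : ℕ) ≠ (b : ℕ) := fun hc => hb (by ext; simp [← hc])
        simp [glinTarget, hp, hne]
      rw [h2]
      simp [glinTarget, hp]
    · rw [dif_neg h]
      refine Finset.sum_eq_zero fun c _ => ?_
      have hne : (p.2 : ℕ) ≠ (c : ℕ) := fun hc => h (hc ▸ c.isLt)
      simp [glinTarget, hp, hne]

/-- The linear embedding `x ↦ (x, 0, …, 0)`. -/
private def emb0 (k n : ℕ) :
    (Fin n → RatFunc F) →ₗ[RatFunc F] (Fin k × Fin n → RatFunc F) :=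
  (matRF (Matrix.of fun (q : Fin k × Fin n) (c : Fin n) =>
    if (q.1 : ℕ) = 0 ∧ q.2 = c then (1 : F[X]) else 0)).mulVecLin

private lemma emb0_apply {k n : ℕ} (x : Fin n → RatFunc F) (q : Fin k × Fin n) :
    emb0 k n x q = if (q.1 : ℕ) = 0 then x q.2 else 0 := by
  classical
  show ((matRF _).mulVec x) q = _
  rw [Matrix.mulVec, dotProduct, Finset.sum_eq_single q.2]
  · by_cases h : (q.1 : ℕ) = 0 <;> simp [matRF, h]
  · intro b _ hb
    have : q.2 ≠ b := Ne.symm hb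
    simp [matRF, this]
  · intro h; exact absurd (Finset.mem_univ _) h

private lemma emb0_injective {k n : ℕ} (hk : 0 < k) :
    Function.Injective (emb0 (F := F) k n) := by
  intro a b hab
  funext j
  have h := congrFun hab (⟨0, hk⟩, j)
  rw [emb0_apply, emb0_apply] at h
  simpa using h

private lemma ker_glinTarget {k m n : ℕ} (hk : 0 < k) (hmn : n ≤ m)
    (P : Matrix (Fin m) (Fin n) F[X]) :
    LinearMap.ker ((matRF (glinTarget (k := k) P)).mulVecLin)
      = Submodule.map (emb0 k n) (Nr P) := by
  apply le_antisymm
  · intro z hz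
    have hz' : (matRF (glinTarget (k := k) P)).mulVec z = 0 := hz
    have hzero : ∀ q : Fin k × Fin n, (q.1 : ℕ) ≠ 0 → z q = 0 := by
      intro q hq
      have h := congrFun hz' (q.1, ⟨(q.2 : ℕ), lt_of_lt_of_le q.2.isLt hmn⟩)
      rw [glinTarget_mulVec] at h
      simpa [hq, q.2.isLt] using h
    refine ⟨fun c => z (⟨0, hk⟩, c), ?_, ?_⟩
    · show (matRF P).mulVecLin _ = 0
      funext r
      have h := congrFun hz' (⟨0, hk⟩, r)
      rw [glinTarget_mulVec] at h
      simpa [Matrix.mulVecLin_apply, Matrix.mulVec, dotProduct, matRF] using h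
    · funext q
      obtain ⟨q1, q2⟩ := q
      rw [emb0_apply]
      by_cases h : (q1 : ℕ) = 0
      · have hq : q1 = ⟨0, hk⟩ := by ext; exact h
        rw [if_pos h, hq]
      · rw [if_neg h, hzero (q1, q2) h]
  · rintro _ ⟨x, hx, rfl⟩
    have hx' : (matRF P).mulVec x = 0 := hx
    show (matRF (glinTarget (k := k) P)).mulVec _ = 0
    funext p
    simp only [Pi.zero_apply]
    rw [glinTarget_mulVec]
    by_cases hp : (p.1 : ℕ) = 0
    · rw [if_pos hp]
      have h2 := congrFun hx' p.2
      simp only [Matrix.mulVec, dotProduct, matRF, Matrix.map_apply, Pi.zero_apply] at h2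
      rw [Finset.sum_congr rfl fun c _ => by rw [emb0_apply, if_pos hp]]
      exact h2
    · rw [if_neg hp]
      by_cases h : (p.2 : ℕ) < n
      · rw [dif_pos h, emb0_apply, if_neg hp]
      · rw [dif_neg h]

private lemma finrank_Nr_eq {k m n : ℕ} (hk : 0 < k) (hmn : n ≤ m)
    {P : Matrix (Fin m) (Fin n) F[X]}
    {L : Matrix (Fin k × Fin m) (Fin k × Fin n) F[X]}
    (hg : IsGLin P L) :
    Module.finrank (RatFunc F) (Nr L) = Module.finrank (RatFunc F) (Nr P) := by
  obtain ⟨E, G, hE, hG, hEG⟩ := hg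
  have hEG' : matRF E * matRF L * matRF G = matRF (glinTarget P) := by
    rw [← matRF_mul, ← matRF_mul, hEG]
  have hE' : IsUnit (matRF E).det := isUnit_matRF_det hE
  have hG' : IsUnit (matRF G).det := isUnit_matRF_det hG
  have hrank : (matRF L).rank = (matRF (glinTarget (k := k) P)).rank := by
    rw [← hEG', Matrix.rank_mul_eq_left_of_isUnit_det _ _ hG',
      Matrix.rank_mul_eq_right_of_isUnit_det _ _ hE']
  have h1 : (matRF L).rank
        + Module.finrank (RatFunc F) (LinearMap.ker (matRF L).mulVecLin)
      = Module.finrank (RatFunc F) (Fin k × Fin n → RatFunc F) :=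
    LinearMap.finrank_range_add_finrank_ker ((matRF L).mulVecLin)
  have h2 : (matRF (glinTarget (k := k) P)).rank
        + Module.finrank (RatFunc F)
            (LinearMap.ker (matRF (glinTarget (k := k) P)).mulVecLin)
      = Module.finrank (RatFunc F) (Fin k × Fin n → RatFunc F) :=
    LinearMap.finrank_range_add_finrank_ker _
  have h3 : Module.finrank (RatFunc F) (Nr L)
      = Module.finrank (RatFunc F)
          (LinearMap.ker (matRF (glinTarget (k := k) P)).mulVecLin) := by
    have : Module.finrank (RatFunc F) (Nr L)
        = Module.finrank (RatFunc F) (LinearMap.ker (matRF L).mulVecLin) := rfl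
    omega
  rw [h3, ker_glinTarget hk hmn P,
    (Submodule.equivMapOfInjective _ (emb0_injective hk) (Nr P)).finrank_eq.symm]

private lemma map_lamT_Nr {k m n : ℕ} (hk : 0 < k) (hmn : n ≤ m)
    {P : Matrix (Fin m) (Fin n) F[X]}
    {L : Matrix (Fin k × Fin m) (Fin k × Fin n) F[X]}
    (hmem : ∃ v : Fin k → F, RightAnsatz P L v) (hg : IsGLin P L) :
    Submodule.map (lamT k n) (Nr P) = Nr L := by
  obtain ⟨v, hv⟩ := hmem
  refine Submodule.eq_of_le_of_finrank_le (mem_Nr_map hv) ?_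
  rw [finrank_Nr_eq hk hmn hg,
    (Submodule.equivMapOfInjective _ (lamT_injective hk) (Nr P)).finrank_eq.symm]


private lemma polyVec_eq_zero_iff {γ : Type*} {x : γ → F[X]} :
    polyVec x = 0 ↔ x = 0 := by
  constructor
  · intro h
    funext j
    have := congrFun h j
    exact amInj (by simpa [polyVec] using this)
  · rintro rfl
    funext j
    simp [polyVec]

private lemma extract_poly {k n : ℕ} (hk : 0 < k) (y : Fin k × Fin n → F[X])
    (xr : Fin n → RatFunc F) (h : polyVec y = lamT k n xr) :
    ∃ x : Fin n → F[X], polyVec x = xr ∧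
      y = fun p => X ^ (k - 1 - (p.1 : ℕ)) * x p.2 := by
  have hk1 : k - 1 < k := Nat.sub_lt hk one_pos
  have hxr : ∀ j, xr j = algebraMap F[X] (RatFunc F) (y (⟨k - 1, hk1⟩, j)) := by
    intro j
    have := congrFun h (⟨k - 1, hk1⟩, j)
    rw [lamT_apply] at this
    simpa [polyVec] using this.symm
  refine ⟨fun j => y (⟨k - 1, hk1⟩, j), by funext j; exact (hxr j).symm, ?_⟩
  funext p
  have hp := congrFun h p
  rw [lamT_apply, hxr p.2] at hp
  apply amInj
  rw [_root_.map_mul]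
  exact hp

private lemma le_polyVecDeg {γ : Type*} [Fintype γ] (x : γ → F[X]) (j : γ) :
    (x j).natDegree ≤ polyVecDeg x := by
  unfold polyVecDeg
  exact Finset.le_sup (f := fun i => (x i).natDegree) (Finset.mem_univ j)

private lemma polyVecDeg_lam {k n : ℕ} (hk : 0 < k) {x : Fin n → F[X]} (hx : x ≠ 0) :
    polyVecDeg (fun p : Fin k × Fin n => X ^ (k - 1 - (p.1 : ℕ)) * x p.2)
      = (k - 1) + polyVecDeg x := by
  classical
  obtain ⟨j0, hj0⟩ : ∃ j, x j ≠ 0 := by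
    by_contra hcon
    push_neg at hcon
    exact hx (funext hcon)
  obtain ⟨j, hjne, hjdeg⟩ : ∃ j, x j ≠ 0 ∧ (x j).natDegree = polyVecDeg x := by
    obtain ⟨j1, _, hj1⟩ :=
      Finset.exists_mem_eq_sup (Finset.univ : Finset (Fin n)) ⟨j0, Finset.mem_univ j0⟩
        fun i => (x i).natDegree
    by_cases hz : x j1 = 0
    · refine ⟨j0, hj0, le_antisymm (le_polyVecDeg x j0) ?_⟩
      rw [show polyVecDeg x = (x j1).natDegree from hj1, hz, natDegree_zero]
      exact Nat.zero_le _
    · exact ⟨j1, hz, hj1.symm⟩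
  apply le_antisymm
  · refine Finset.sup_le fun p _ => ?_
    by_cases hz : x p.2 = 0
    · simp [hz]
    · rw [natDegree_mul (pow_ne_zero _ X_ne_zero) hz, natDegree_X_pow]
      exact Nat.add_le_add (Nat.sub_le_sub_left (Nat.zero_le _) _)
        (le_polyVecDeg x p.2)
  · have hle : ((fun p : Fin k × Fin n => X ^ (k - 1 - (p.1 : ℕ)) * x p.2)
          ((⟨0, hk⟩ : Fin k), j)).natDegree
        ≤ polyVecDeg (fun p : Fin k × Fin n => X ^ (k - 1 - (p.1 : ℕ)) * x p.2) :=
      le_polyVecDeg (fun p : Fin k × Fin n => X ^ (k - 1 - (p.1 : ℕ)) * x p.2)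
        ((⟨0, hk⟩ : Fin k), j)
    simp only at hle
    rw [natDegree_mul (pow_ne_zero _ X_ne_zero) hjne, natDegree_X_pow] at hle
    simpa [hjdeg] using hle

private lemma polyBasis_ne_zero {γ : Type*} [Fintype γ]
    {V : Submodule (RatFunc F) (γ → RatFunc F)} {d : ℕ} {b : Fin d → γ → F[X]}
    (hb : IsPolyBasis V b) (i : Fin d) : b i ≠ 0 := by
  intro hz
  have := hb.1.ne_zero i
  rw [hz] at this
  exact this (polyVec_eq_zero_iff.mpr rfl)

private lemma polyBasis_card {γ : Type*} [Fintype γ]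
    {V : Submodule (RatFunc F) (γ → RatFunc F)} {d : ℕ} {b : Fin d → γ → F[X]}
    (hb : IsPolyBasis V b) : d = Module.finrank (RatFunc F) V := by
  have h := finrank_span_eq_card hb.1
  rw [hb.2] at h
  simpa using h.symm

private lemma polyBasis_map {k m n d : ℕ} (hk : 0 < k)
    {P : Matrix (Fin m) (Fin n) F[X]}
    {L : Matrix (Fin k × Fin m) (Fin k × Fin n) F[X]}
    (hmap : Submodule.map (lamT k n) (Nr P) = Nr L)
    {x : Fin d → Fin n → F[X]} (hb : IsPolyBasis (Nr P) x) :
    IsPolyBasis (Nr L)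
      (fun i => fun p : Fin k × Fin n => X ^ (k - 1 - (p.1 : ℕ)) * x i p.2) := by
  have hcomp : (fun i => polyVec
        (fun p : Fin k × Fin n => X ^ (k - 1 - (p.1 : ℕ)) * x i p.2))
      = (lamT k n) ∘ fun i => polyVec (x i) := by
    funext i
    exact polyVec_lam (x i)
  constructor
  · rw [hcomp]
    exact hb.1.map' _ (LinearMap.ker_eq_bot.mpr (lamT_injective hk))
  · rw [hcomp, Set.range_comp, ← Submodule.map_span, hb.2, hmap]

private lemma polyBasis_extract {k m n d : ℕ} (hk : 0 < k)
    {P : Matrix (Fin m) (Fin n) F[X]}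
    {L : Matrix (Fin k × Fin m) (Fin k × Fin n) F[X]}
    (hmap : Submodule.map (lamT k n) (Nr P) = Nr L)
    {b : Fin d → Fin k × Fin n → F[X]} (hb : IsPolyBasis (Nr L) b) :
    ∃ x : Fin d → Fin n → F[X],
      (∀ i, b i = fun p => X ^ (k - 1 - (p.1 : ℕ)) * x i p.2) ∧
      IsPolyBasis (Nr P) x := by
  classical
  have hmem : ∀ i, polyVec (b i) ∈ Nr L := fun i =>
    hb.2 ▸ Submodule.subset_span (Set.mem_range_self i)
  have hex : ∀ i, ∃ x : Fin n → F[X], polyVec x ∈ Nr P ∧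
      b i = fun p => X ^ (k - 1 - (p.1 : ℕ)) * x p.2 := by
    intro i
    have h1 : polyVec (b i) ∈ Submodule.map (lamT k n) (Nr P) := by rw [hmap]; exact hmem i
    obtain ⟨xr, hxr, hxeq⟩ := h1
    obtain ⟨x, hpx, hbx⟩ := extract_poly hk (b i) xr hxeq.symm
    exact ⟨x, hpx ▸ hxr, hbx⟩
  choose x hx1 hx2 using hex
  refine ⟨x, hx2, ?_, ?_⟩
  · have hcomp : (lamT (F := F) k n) ∘ (fun i => polyVec (x i))
        = fun i => polyVec (b i) := by
      funext i
      rw [Function.comp_apply, ← polyVec_lam, ← hx2 i]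
    apply LinearIndependent.of_comp (lamT k n)
    rw [hcomp]
    exact hb.1
  · have hspan : Submodule.map (lamT k n)
        (Submodule.span (RatFunc F) (Set.range fun i => polyVec (x i)))
      = Submodule.map (lamT k n) (Nr P) := by
      rw [Submodule.map_span, ← Set.range_comp, hmap]
      have hcomp : (lamT (F := F) k n) ∘ (fun i => polyVec (x i))
          = fun i => polyVec (b i) := by
        funext i
        rw [Function.comp_apply, ← polyVec_lam, ← hx2 i]
      rw [hcomp, hb.2]
    exact Submodule.map_injective_of_injective (lamT_injective hk) hspan

private lemma sum_deg_lam {k n d : ℕ} (hk : 0 < k) {x : Fin d → Fin n → F[X]}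
    (hx : ∀ i, x i ≠ 0) :
    (∑ i, polyVecDeg
        (fun p : Fin k × Fin n => X ^ (k - 1 - (p.1 : ℕ)) * x i p.2))
      = d * (k - 1) + ∑ i, polyVecDeg (x i) := by
  rw [Finset.sum_congr rfl fun i _ => polyVecDeg_lam hk (hx i),
    Finset.sum_add_distrib, Finset.sum_const, Finset.card_univ, Fintype.card_fin,
    smul_eq_mul]


private lemma min_map {k m n d : ℕ} (hk : 0 < k)
    {P : Matrix (Fin m) (Fin n) F[X]}
    {L : Matrix (Fin k × Fin m) (Fin k × Fin n) F[X]}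
    (hmap : Submodule.map (lamT k n) (Nr P) = Nr L)
    {x : Fin d → Fin n → F[X]} (hx : IsMinimalBasis (Nr P) x) :
    IsMinimalBasis (Nr L)
      (fun i => fun p : Fin k × Fin n => X ^ (k - 1 - (p.1 : ℕ)) * x i p.2) := by
  refine ⟨polyBasis_map hk hmap hx.1, ?_⟩
  intro e b' hb'
  obtain ⟨x', hbx', hx'⟩ := polyBasis_extract hk hmap hb'
  have hde : d = e := by
    rw [polyBasis_card hx.1, ← polyBasis_card hx']
  have hxne : ∀ i, x i ≠ 0 := polyBasis_ne_zero hx.1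
  have hx'ne : ∀ i, x' i ≠ 0 := polyBasis_ne_zero hx'
  have hL : (∑ i, polyVecDeg
        ((fun i => fun p : Fin k × Fin n => X ^ (k - 1 - (p.1 : ℕ)) * x i p.2) i))
      = d * (k - 1) + ∑ i, polyVecDeg (x i) := sum_deg_lam hk hxne
  have hR : (∑ i, polyVecDeg (b' i))
      = e * (k - 1) + ∑ i, polyVecDeg (x' i) := by
    rw [Finset.sum_congr rfl fun i _ => congrArg polyVecDeg (hbx' i)]
    exact sum_deg_lam hk hx'ne
  subst hde
  rw [hL, hR]
  exact Nat.add_le_add_left (hx.2 d x' hx') _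

private lemma min_extract {k m n d : ℕ} (hk : 0 < k)
    {P : Matrix (Fin m) (Fin n) F[X]}
    {L : Matrix (Fin k × Fin m) (Fin k × Fin n) F[X]}
    (hmap : Submodule.map (lamT k n) (Nr P) = Nr L)
    {b : Fin d → Fin k × Fin n → F[X]} (hb : IsMinimalBasis (Nr L) b) :
    ∃ x : Fin d → Fin n → F[X], IsMinimalBasis (Nr P) x ∧
      (∀ i, b i = fun p => X ^ (k - 1 - (p.1 : ℕ)) * x i p.2) ∧
      (∀ i, polyVecDeg (b i) = (k - 1) + polyVecDeg (x i)) := by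
  obtain ⟨x, hbx, hx⟩ := polyBasis_extract hk hmap hb.1
  have hxne : ∀ i, x i ≠ 0 := polyBasis_ne_zero hx
  refine ⟨x, ⟨hx, ?_⟩, hbx, fun i => by
    rw [hbx i]; exact polyVecDeg_lam hk (hxne i)⟩
  intro e x' hx'
  have hde : d = e := by
    rw [polyBasis_card hx, ← polyBasis_card hx']
  have hx'ne : ∀ i, x' i ≠ 0 := polyBasis_ne_zero hx'
  have h1 := hb.2 e
    (fun i => fun p : Fin k × Fin n => X ^ (k - 1 - (p.1 : ℕ)) * x' i p.2)
    (polyBasis_map hk hmap hx')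
  have hL : (∑ i, polyVecDeg (b i)) = d * (k - 1) + ∑ i, polyVecDeg (x i) := by
    rw [Finset.sum_congr rfl fun i _ => congrArg polyVecDeg (hbx i)]
    exact sum_deg_lam hk hxne
  have hR : (∑ i, polyVecDeg
        ((fun i => fun p : Fin k × Fin n => X ^ (k - 1 - (p.1 : ℕ)) * x' i p.2) i))
      = e * (k - 1) + ∑ i, polyVecDeg (x' i) := sum_deg_lam hk hx'ne
  subst hde
  rw [hL, hR] at h1
  omega

end Aux

/-- For `m ≥ n`, `nrank P = r` and a g-linearization `L ∈ 𝕃₁(P)` of `P`: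
(1) the right minimal indices of `P` are `ε₁ ≤ … ≤ ε_{n−r}` iff those of `L` are
`(k−1)+ε₁ ≤ … ≤ (k−1)+ε_{n−r}`; (2) every right minimal basis of `L` is
`{Λ_k(λ) ⊗ x_i(λ)}` for a right minimal basis `{x_i(λ)}` of `P`. -/
theorem statement_7 {F : Type*} [RCLike F] {k m n : ℕ} (hk : 0 < k) (hmn : n ≤ m)
    (r : ℕ) (A : Fin (k + 1) → Matrix (Fin m) (Fin n) F)
    (hr : nrank (matPoly A) = r)
    (Xc Yc : Matrix (Fin k × Fin m) (Fin k × Fin n) F)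
    (hmem : ∃ v : Fin k → F, RightAnsatz (matPoly A) (pencil Xc Yc) v)
    (hg : IsGLin (matPoly A) (pencil Xc Yc)) :
    (∀ ε : Fin (n - r) → ℕ, Monotone ε →
      (HasMinIndices (Nr (matPoly A)) ε ↔
        HasMinIndices (Nr (pencil Xc Yc)) fun i => (k - 1) + ε i)) ∧
    (∀ b : Fin (n - r) → (Fin k × Fin n → F[X]),
      IsMinimalBasis (Nr (pencil Xc Yc)) b →
        ∃ x : Fin (n - r) → (Fin n → F[X]),
          IsMinimalBasis (Nr (matPoly A)) x ∧
            ∀ i, b i = fun p => Polynomial.X ^ (k - 1 - (p.1 : ℕ)) * x i p.2) := by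
  have hmap := map_lamT_Nr hk hmn hmem hg
  constructor
  · intro ε _
    constructor
    · rintro ⟨x, hxmin, hxdeg⟩
      refine ⟨fun i => fun p : Fin k × Fin n => X ^ (k - 1 - (p.1 : ℕ)) * x i p.2,
        min_map hk hmap hxmin, fun i => ?_⟩
      rw [polyVecDeg_lam hk (polyBasis_ne_zero hxmin.1 i), hxdeg i]
    · rintro ⟨b, hbmin, hbdeg⟩
      obtain ⟨x, hxmin, hbx, hdeg⟩ := min_extract hk hmap hbmin
      refine ⟨x, hxmin, fun i => ?_⟩
      have h1 := hbdeg i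
      rw [hdeg i] at h1
      simp only [] at h1
      omega
  · intro b hbmin
    obtain ⟨x, hxmin, hbx, _⟩ := min_extract hk hmap hbmin
    exact ⟨x, hxmin, hbx⟩
end GLin
end
end

section
/- Let P(λ) = Σ_{i=0}^k λ^i A_i be an m×n matrix polynomial of grade k with m ≥ n, and suppose L(λ) ∈ 𝕃₁(P) has full Z-rank and nonzero right ansatz vector v. Then the map 𝓛_v : N_l(L) → N_l(P) given by y(λ) ↦ (v^T⊗I_m)y(λ) is a surjective F(λ)-linear map. Furthermore, 𝓛_v maps the vector polynomials in N_l(L) onto the vector polynomials in N_l(P), and for every vector polynomial q(λ) ∈ N_l(P) of degree δ there exists a vector polynomial y(λ) ∈ N_l(L) of degree exactly δ with 𝓛_v(y(λ)) = q(λ). -/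
noncomputable section

open Polynomial Matrix

namespace GLin

variable {F : Type*} [RCLike F]

/-!
Multiplying `L` on the left by `M ⊗ I_m` reduces everything to the ansatz vector `α e₁`,
for which `𝓛_{α e₁}` reads off `α` times the top block of `y`. Given `q ∈ N_l(P)` we look for
`y = [α⁻¹ q; z]`. A block row `s = yᵀ L` vanishes iff all its partial Horner sums
`h_j = ∑_{t ≤ j} λ^(j-t) s_t` do, and the last one is `yᵀ L Λ = qᵀ P = 0` for free. The lower
block rows of `L` are annihilated by `Λ`, so their partial Horner sums are just their constant
parts, the blocks of `Z`; the remaining conditions therefore read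
`zᵀ Z = -(partial Horner sums of α⁻¹ qᵀ L_top)`, which a left inverse of `Z` solves.
Because the full Horner sum vanishes, `λ^(k-1-j) h_j = -∑_{t > j} λ^(k-1-t) s_t`, so the
partial Horner sums of `α⁻¹ qᵀ L_top` have degree at most `deg q`; hence `deg y ≤ deg q`, and
`deg 𝓛_v(y) ≤ deg y` forces equality. Surjectivity over `F(λ)` follows by clearing
denominators.
-/

open Finset

section NullSpace

variable {ρ γ : Type*}

@[simp]
lemma polyVec_zero : polyVec (0 : γ → F[X]) = 0 :=
  funext fun _ => map_zero _

lemma polyVec_injective : Function.Injective (polyVec : (γ → F[X]) → γ → RatFunc F) :=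
  fun _ _ h => funext fun i => RatFunc.algebraMap_injective F (congrFun h i)

variable [Fintype ρ]

lemma mem_Nl_iff_vecMul (P : Matrix ρ γ F[X]) (x : ρ → RatFunc F) :
    x ∈ Nl P ↔ x ᵥ* matRF P = 0 := by
  rw [Nl, Nr, LinearMap.mem_ker, mulVecLin_apply, matRF, transpose_map, mulVec_transpose, matRF]

lemma polyVec_vecMul (y : ρ → F[X]) (P : Matrix ρ γ F[X]) :
    polyVec y ᵥ* matRF P = polyVec (y ᵥ* P) :=
  funext fun j => (RingHom.map_vecMul _ P y j).symm

lemma polyVec_mem_Nl_iff (P : Matrix ρ γ F[X]) (y : ρ → F[X]) :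
    polyVec y ∈ Nl P ↔ y ᵥ* P = 0 := by
  rw [mem_Nl_iff_vecMul, polyVec_vecMul, ← polyVec_zero, polyVec_injective.eq_iff]

end NullSpace

lemma exists_polyVec_eq_smul {ι : Type*} [Finite ι] (x : ι → RatFunc F) :
    ∃ s : F[X], s ≠ 0 ∧ ∃ q : ι → F[X], polyVec q = algebraMap F[X] (RatFunc F) s • x := by
  obtain ⟨s, hs⟩ := IsLocalization.exist_integer_multiples_of_finite (nonZeroDivisors F[X]) x
  choose q hq using hs
  exact ⟨s, nonZeroDivisors.coe_ne_zero s, q, funext fun i => (hq i).trans (Algebra.smul_def _ _)⟩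

lemma surjective_restrict_of_polyVec {ι κ : Type*} [Finite κ]
    (f : (ι → RatFunc F) →ₗ[RatFunc F] κ → RatFunc F)
    {V : Submodule (RatFunc F) (ι → RatFunc F)} {W : Submodule (RatFunc F) (κ → RatFunc F)}
    (hf : ∀ x ∈ V, f x ∈ W)
    (hpoly : ∀ q, polyVec q ∈ W → ∃ y, polyVec y ∈ V ∧ f (polyVec y) = polyVec q) :
    Function.Surjective (f.restrict hf) := by
  rintro ⟨x, hx⟩
  obtain ⟨s, hs, q, hq⟩ := exists_polyVec_eq_smul x
  obtain ⟨y, hyV, hy⟩ := hpoly q (hq ▸ W.smul_mem _ hx)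
  have hs' : algebraMap F[X] (RatFunc F) s ≠ 0 :=
    (map_ne_zero_iff _ (RatFunc.algebraMap_injective F)).2 hs
  refine ⟨⟨(algebraMap F[X] (RatFunc F) s)⁻¹ • polyVec y, V.smul_mem _ hyV⟩, Subtype.ext ?_⟩
  simp only [LinearMap.restrict_apply, map_smul, hy, hq, inv_smul_smul₀ hs']

section Degree

variable {ρ γ : Type*} [Fintype ρ]

lemma natDegree_le_polyVecDeg (y : ρ → F[X]) (i : ρ) : (y i).natDegree ≤ polyVecDeg y :=
  le_sup (f := fun i => (y i).natDegree) (mem_univ i)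

lemma polyVecDeg_le_iff {y : ρ → F[X]} {d : ℕ} : polyVecDeg y ≤ d ↔ ∀ i, (y i).natDegree ≤ d :=
  Finset.sup_le_iff.trans (by simp)

lemma polyVecDeg_vecMul_map_C_le [Fintype γ] (y : ρ → F[X]) (A : Matrix ρ γ F) :
    polyVecDeg (y ᵥ* A.map C) ≤ polyVecDeg y :=
  polyVecDeg_le_iff.2 fun _ => natDegree_sum_le_of_forall_le _ _ fun i _ =>
    natDegree_mul_le.trans (by simpa using natDegree_le_polyVecDeg y i)

end Degree

section Projection

variable {k m n : ℕ}

lemma vproj_mulVec_polyVec (v : Fin k → F) (y : Fin k × Fin m → F[X]) :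
    vproj v *ᵥ polyVec y = polyVec (LvPoly v y) := by
  funext r
  simp only [mulVec, dotProduct, vproj, of_apply, polyVec, LvPoly, map_sum,
    Fintype.sum_prod_type]
  refine sum_congr rfl fun i _ => ?_
  simp [ite_mul, _root_.map_mul]

lemma polyVecDeg_LvPoly_le (v : Fin k → F) (y : Fin k × Fin m → F[X]) :
    polyVecDeg (LvPoly v y) ≤ polyVecDeg y :=
  polyVecDeg_le_iff.2 fun r => natDegree_sum_le_of_forall_le _ _ fun i _ =>
    (natDegree_C_mul_le _ _).trans (natDegree_le_polyVecDeg y (i, r))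

lemma vecMul_vkron (y : Fin k × Fin m → F[X]) (v : Fin k → F) (P : Matrix (Fin m) (Fin n) F[X]) :
    y ᵥ* vkron v P = LvPoly v y ᵥ* P := by
  funext c
  simp only [vecMul, dotProduct, vkron, LvPoly, of_apply, Fintype.sum_prod_type, sum_mul]
  rw [sum_comm]
  exact sum_congr rfl fun r _ => sum_congr rfl fun i _ => by ring

lemma vproj_transpose_mul_matRF (v : Fin k → F) (P : Matrix (Fin m) (Fin n) F[X]) :
    (vproj (m := m) v)ᵀ * matRF P = matRF (vkron v P) := by
  ext p c
  simp [Matrix.mul_apply, vproj, vkron, matRF]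

lemma vproj_mulVec_mem_Nl {P : Matrix (Fin m) (Fin n) F[X]}
    {L : Matrix (Fin k × Fin m) (Fin k × Fin n) F[X]} {v : Fin k → F}
    (hL : RightAnsatz P L v) {x : Fin k × Fin m → RatFunc F} (hx : x ∈ Nl L) :
    vproj v *ᵥ x ∈ Nl P := by
  rw [mem_Nl_iff_vecMul] at hx ⊢
  rw [← vecMul_transpose, vecMul_vecMul, vproj_transpose_mul_matRF, ← hL, matRF, Matrix.map_mul,
    ← vecMul_vecMul]
  exact (congrArg (· ᵥ* _) hx).trans (zero_vecMul _)

end Projection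

section ChangeOfBasis

variable {k m n : ℕ}

lemma map_C_mul_pencil {ι ρ γ : Type*} [Fintype ρ] (T : Matrix ι ρ F) (Xc Yc : Matrix ρ γ F) :
    T.map C * pencil Xc Yc = pencil (T * Xc) (T * Yc) := by
  ext i j
  simp [Matrix.mul_apply, pencil, sum_mul, sum_add_distrib, mul_add, mul_assoc]

lemma kronId_map_C_mul_vkron (M : Matrix (Fin k) (Fin k) F) (v : Fin k → F)
    (P : Matrix (Fin m) (Fin n) F[X]) :
    (kronId (m := m) M).map C * vkron v P = vkron (M *ᵥ v) P := by
  refine Matrix.ext fun ⟨i, r⟩ c => ?_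
  simp [Matrix.mul_apply, kronId, vkron, mulVec, dotProduct, Fintype.sum_prod_type, sum_mul,
    mul_assoc, apply_ite C, ite_mul]

lemma RightAnsatz.kronId_mul {P : Matrix (Fin m) (Fin n) F[X]}
    {Xc Yc : Matrix (Fin k × Fin m) (Fin k × Fin n) F} {v : Fin k → F}
    (hL : RightAnsatz P (pencil Xc Yc) v) (M : Matrix (Fin k) (Fin k) F) :
    RightAnsatz P (pencil (kronId (m := m) M * Xc) (kronId (m := m) M * Yc)) (M *ᵥ v) := by
  rw [RightAnsatz, ← map_C_mul_pencil, Matrix.mul_assoc, hL, kronId_map_C_mul_vkron]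

lemma LvPoly_vecMul_kronId (M : Matrix (Fin k) (Fin k) F) (v : Fin k → F)
    (y : Fin k × Fin m → F[X]) :
    LvPoly v (y ᵥ* (kronId (m := m) M).map C) = LvPoly (M *ᵥ v) y := by
  funext r
  simp only [LvPoly, vecMul, dotProduct, kronId, map_apply, of_apply, apply_ite C, map_zero,
    mul_ite, mul_zero, Fintype.sum_prod_type, sum_ite_eq', mem_univ, ↓reduceIte, mul_sum, mulVec,
    map_sum, map_mul, sum_mul]
  rw [sum_comm]
  exact sum_congr rfl fun _ _ => sum_congr rfl fun _ _ => by ring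

end ChangeOfBasis

section Horner

variable {R : Type*} [CommRing R] {k n : ℕ}

/-- `s ᵥ* hornerMat R k n` lists the partial Horner sums `∑_{t ≤ j} λ^(j-t) s_t` of a block row
`s = [s_0, …, s_{k-1}]`; its last block column is `Λ_k(λ) ⊗ I_n`. -/
def hornerMat (R : Type*) [CommRing R] (k n : ℕ) : Matrix (Fin k × Fin n) (Fin k × Fin n) R[X] :=
  Matrix.of fun t j => if t.2 = j.2 ∧ t.1 ≤ j.1 then X ^ ((j.1 : ℕ) - t.1) else 0

lemma vecMul_hornerMat_apply (s : Fin k × Fin n → R[X]) (j : Fin k) (c : Fin n) :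
    (s ᵥ* hornerMat R k n) (j, c) = ∑ t with t ≤ j, X ^ ((j : ℕ) - t) * s (t, c) := by
  simp only [vecMul, dotProduct, hornerMat, of_apply, Fintype.sum_prod_type, mul_ite, mul_zero,
    sum_filter]
  refine sum_congr rfl fun t _ => ?_
  by_cases h : t ≤ j <;> simp [h, mul_comm]

lemma eq_zero_of_vecMul_hornerMat_eq_zero {s : Fin k × Fin n → R[X]}
    (hs : s ᵥ* hornerMat R k n = 0) : s = 0 := by
  suffices ∀ j c, s (j, c) = 0 from funext fun p => this p.1 p.2
  intro j
  induction j using WellFoundedLT.induction with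
  | _ j ih =>
    intro c
    have h := congrFun hs (j, c)
    rwa [vecMul_hornerMat_apply, sum_eq_single_of_mem j (by simp), Nat.sub_self, pow_zero,
      one_mul] at h
    intro t ht htj
    rw [ih t (lt_of_le_of_ne (mem_filter.1 ht).2 htj), mul_zero]

lemma vecMul_hornerMat_last (s : Fin (k + 1) × Fin n → F[X]) (c : Fin n) :
    (s ᵥ* hornerMat F (k + 1) n) (Fin.last k, c) = (s ᵥ* Lam F (k + 1) n) c := by
  simp only [vecMul, dotProduct]
  refine sum_congr rfl fun t _ => ?_
  simp [hornerMat, Lam, Fin.le_last]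

end Horner

section HornerDegree

variable {k n : ℕ}

lemma natDegree_vecMul_hornerMat_le {s : Fin (k + 1) × Fin n → F[X]} {d : ℕ}
    (hs : ∀ c, (s ᵥ* hornerMat F (k + 1) n) (Fin.last k, c) = 0)
    (hdeg : ∀ i, (s i).natDegree ≤ d + 1) (i : Fin (k + 1) × Fin n) :
    ((s ᵥ* hornerMat F (k + 1) n) i).natDegree ≤ d := by
  obtain ⟨j, c⟩ := i
  set h := (s ᵥ* hornerMat F (k + 1) n) (j, c) with h_def
  rcases eq_or_ne h 0 with h0 | h0
  · simp [h0]
  have hj : (j : ℕ) ≤ k := Fin.is_le j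
  have key : X ^ (k - j) * h = -∑ t with ¬t ≤ j, X ^ (k - (t : ℕ)) * s (t, c) := by
    have total := hs c
    rw [vecMul_hornerMat_apply, filter_true_of_mem fun t _ => Fin.le_last t,
      ← sum_filter_add_sum_filter_not _ (· ≤ j)] at total
    rw [eq_neg_iff_add_eq_zero, ← total, h_def, vecMul_hornerMat_apply, mul_sum]
    congr 1
    refine sum_congr rfl fun t ht => ?_
    have htj : (t : ℕ) ≤ j := (mem_filter.1 ht).2
    rw [← mul_assoc, ← pow_add, Fin.val_last]
    congr 2
    omega
  have hbound : (X ^ (k - j) * h).natDegree ≤ k - j + d := by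
    rw [key, natDegree_neg]
    refine natDegree_sum_le_of_forall_le _ _ fun t ht => ?_
    have htj : (j : ℕ) < t := not_le.1 (mem_filter.1 ht).2
    refine natDegree_mul_le.trans ?_
    have := hdeg (t, c)
    rw [natDegree_X_pow]
    omega
  rw [natDegree_X_pow_mul _ h0] at hbound
  omega

lemma pencil_mul_hornerMat {ρ : Type*} (Xc Yc : Matrix ρ (Fin (k + 1) × Fin n) F)
    (h : pencil Xc Yc * Lam F (k + 1) n = 0) :
    pencil Xc Yc * hornerMat F (k + 1) n = Yc.map C := by
  refine Matrix.ext fun p ⟨j, c⟩ => ?_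
  have hlast : ∀ c, (pencil Xc Yc p ᵥ* hornerMat F (k + 1) n) (Fin.last k, c) = 0 := fun c => by
    rw [vecMul_hornerMat_last, ← mul_apply_eq_vecMul, h]
    rfl
  rw [mul_apply_eq_vecMul, eq_C_of_natDegree_le_zero (natDegree_vecMul_hornerMat_le (d := 0) hlast
    (fun _ => natDegree_linear_le) _), vecMul_hornerMat_apply, finsetSum_coeff,
    sum_eq_single_of_mem j (by simp)]
  · simp [pencil]
  · intro t ht htj
    have : (t : ℕ) < j := lt_of_le_of_ne (mem_filter.1 ht).2 (Fin.val_ne_of_ne htj)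
    rw [coeff_X_pow_mul', if_neg (by omega)]

end HornerDegree

lemma exists_mul_eq_one_of_rank_eq_card {K ρ γ : Type*} [Field K] [Fintype ρ] [Fintype γ]
    [DecidableEq γ] (Z : Matrix ρ γ K) (h : Z.rank = Fintype.card γ) :
    ∃ B : Matrix γ ρ K, B * Z = 1 := by
  rw [← vecMul_surjective_iff_exists_left_inverse]
  have htop : LinearMap.range Zᵀ.mulVecLin = ⊤ := Submodule.eq_top_of_finrank_eq <| by
    rw [Module.finrank_fintype_fun_eq_card, ← h, ← rank_transpose]
    rfl
  intro x
  obtain ⟨y, hy⟩ := LinearMap.mem_range.1 (htop ▸ Submodule.mem_top : x ∈ LinearMap.range _)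
  exact ⟨y, (mulVec_transpose Z y).symm.trans hy⟩

section BlockCons

variable {R : Type*} [CommRing R] {k m : ℕ}

def blockCons (a : Fin m → R) (z : Fin k × Fin m → R) : Fin (k + 1) × Fin m → R :=
  fun p => Fin.cases (a p.2) (fun i => z (i, p.2)) p.1

lemma blockCons_vecMul {γ : Type*} (a : Fin m → R) (z : Fin k × Fin m → R)
    (L : Matrix (Fin (k + 1) × Fin m) γ R) :
    blockCons a z ᵥ* L = a ᵥ* L.submatrix (fun r => (0, r)) id
      + z ᵥ* L.submatrix (fun p => (p.1.succ, p.2)) id := by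
  funext j
  simp [vecMul, dotProduct, Fintype.sum_prod_type, Fin.sum_univ_succ, blockCons]

end BlockCons

lemma LvPoly_e1_blockCons {k m : ℕ} (α : F) (a : Fin m → F[X]) (z : Fin k × Fin m → F[X]) :
    LvPoly (e1 α) (blockCons a z) = fun r => C α * a r := by
  funext r
  simp [LvPoly, Fin.sum_univ_succ, e1, blockCons]

section LeftNullVectors

variable {k m n : ℕ}

/-- For `L ∈ 𝕃₁(P)` with ansatz vector `α e₁`, this block of `Y` is the matrix `Z`. -/
def lowerLeftBlock (Yc : Matrix (Fin (k + 1) × Fin m) (Fin (k + 1) × Fin n) F) :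
    Matrix (Fin k × Fin m) (Fin k × Fin n) F :=
  Yc.submatrix (fun p => (p.1.succ, p.2)) (fun q => (q.1.castSucc, q.2))

theorem exists_left_null_preimage_of_e1 {P : Matrix (Fin m) (Fin n) F[X]}
    {Xc Yc : Matrix (Fin (k + 1) × Fin m) (Fin (k + 1) × Fin n) F} {α : F} (hα : α ≠ 0)
    (hL : RightAnsatz P (pencil Xc Yc) (e1 α)) {B : Matrix (Fin k × Fin n) (Fin k × Fin m) F}
    (hB : B * lowerLeftBlock Yc = 1)
    {q : Fin m → F[X]} (hq : q ᵥ* P = 0) :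
    ∃ y, y ᵥ* pencil Xc Yc = 0 ∧ LvPoly (e1 α) y = q ∧ polyVecDeg y ≤ polyVecDeg q := by
  set L := pencil Xc Yc
  set H := hornerMat F (k + 1) n
  set a : Fin m → F[X] := fun r => C α⁻¹ * q r
  have ha : (fun r => C α * a r) = q := funext fun r => by simp [a, ← mul_assoc, ← C_mul, hα]
  have hlast : ∀ y c, (y ᵥ* L ᵥ* H) (Fin.last k, c) = (LvPoly (e1 α) y ᵥ* P) c := fun y c => by
    rw [vecMul_hornerMat_last, vecMul_vecMul, hL, vecMul_vkron]
  set ℓ := a ᵥ* L.submatrix (fun r => (0, r)) id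
  have hℓ_last : ∀ c, (ℓ ᵥ* H) (Fin.last k, c) = 0 := fun c => by
    have hℓ : ℓ = blockCons a 0 ᵥ* L := by rw [blockCons_vecMul, zero_vecMul, add_zero]
    rw [hℓ, hlast, LvPoly_e1_blockCons, ha, hq]
    rfl
  have hℓ_deg : ∀ i, (ℓ i).natDegree ≤ polyVecDeg q + 1 := fun i => by
    simp only [ℓ, a, L, vecMul, dotProduct, submatrix_apply, id, pencil, of_apply]
    exact natDegree_sum_le_of_forall_le _ _ fun r _ => natDegree_mul_le.trans <|
      add_le_add ((natDegree_C_mul_le _ _).trans (natDegree_le_polyVecDeg q r)) natDegree_linear_le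
  have hbot : L.submatrix (fun p : Fin k × Fin m => (p.1.succ, p.2)) id * H
      = (Yc.submatrix (fun p : Fin k × Fin m => (p.1.succ, p.2)) id).map C := by
    refine pencil_mul_hornerMat _ _ (Matrix.ext fun p c => ?_)
    exact (congrFun (congrFun hL (p.1.succ, p.2)) c).trans (by simp [vkron, e1])
  -- `zᵀ Z = w` cancels the partial Horner sums of `ℓ` in every block column but the last.
  set w : Fin k × Fin n → F[X] := fun j => -(ℓ ᵥ* H) (j.1.castSucc, j.2)
  set z := w ᵥ* B.map C
  refine ⟨blockCons a z, eq_zero_of_vecMul_hornerMat_eq_zero ?_, by rw [LvPoly_e1_blockCons, ha],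
    ?_⟩
  · funext ⟨j, c⟩
    induction j using Fin.lastCases with
    | last =>
      rw [hlast, LvPoly_e1_blockCons, ha, hq]
      rfl
    | cast j =>
      have hz : (z ᵥ* (Yc.submatrix (fun p : Fin k × Fin m => (p.1.succ, p.2)) id).map C)
          (j.castSucc, c) = w (j, c) := by
        change (z ᵥ* (lowerLeftBlock Yc).map C) (j, c) = _
        rw [vecMul_vecMul, ← Matrix.map_mul, hB, Matrix.map_one _ (map_zero C) (map_one C),
          vecMul_one]
      rw [blockCons_vecMul, add_vecMul, vecMul_vecMul z, hbot, Pi.add_apply, hz]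
      simp only [w, ℓ, vecMul_vecMul]
      exact add_neg_cancel _
  · refine polyVecDeg_le_iff.2 fun ⟨i, r⟩ => ?_
    induction i using Fin.cases with
    | zero => exact (natDegree_C_mul_le _ _).trans (natDegree_le_polyVecDeg q r)
    | succ i =>
      refine (natDegree_le_polyVecDeg z (i, r)).trans <| (polyVecDeg_vecMul_map_C_le w B).trans <|
        polyVecDeg_le_iff.2 fun j => ?_
      simpa [w] using natDegree_vecMul_hornerMat_le hℓ_last hℓ_deg _

end LeftNullVectors

theorem exists_left_null_preimage {k m n : ℕ} {P : Matrix (Fin m) (Fin n) F[X]}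
    {Xc Yc : Matrix (Fin (k + 1) × Fin m) (Fin (k + 1) × Fin n) F} {v : Fin (k + 1) → F}
    (hL : RightAnsatz P (pencil Xc Yc) v) {M : Matrix (Fin (k + 1)) (Fin (k + 1)) F} {α : F}
    (hα : α ≠ 0) (hMv : M *ᵥ v = e1 α) {B : Matrix (Fin k × Fin n) (Fin k × Fin m) F}
    (hB : B * lowerLeftBlock (kronId (m := m) M * Yc) = 1)
    {q : Fin m → F[X]} (hq : q ᵥ* P = 0) :
    ∃ y, y ᵥ* pencil Xc Yc = 0 ∧ LvPoly v y = q ∧ polyVecDeg y ≤ polyVecDeg q := by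
  obtain ⟨y, hy, hLv, hdeg⟩ := exists_left_null_preimage_of_e1 hα (hMv ▸ hL.kronId_mul M) hB hq
  refine ⟨y ᵥ* (kronId M).map C, ?_, ?_, (polyVecDeg_vecMul_map_C_le _ _).trans hdeg⟩
  · rw [vecMul_vecMul, map_C_mul_pencil, hy]
  · rw [LvPoly_vecMul_kronId, hMv, hLv]

theorem statement_9_general {F : Type*} [RCLike F] {k m n : ℕ} (hk : 0 < k)
    (A : Fin (k + 1) → Matrix (Fin m) (Fin n) F)
    (Xc Yc : Matrix (Fin k × Fin m) (Fin k × Fin n) F)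
    (v : Fin k → F)
    (hL : RightAnsatz (matPoly A) (pencil Xc Yc) v)
    (hZ : FullZrank1 Yc v) :
    (∃ φ : Nl (pencil Xc Yc) →ₗ[RatFunc F] Nl (matPoly A),
      Function.Surjective φ ∧
        ∀ y : Nl (pencil Xc Yc),
          (φ y : Fin m → RatFunc F) =
            (vproj v).mulVec (y : Fin k × Fin m → RatFunc F)) ∧
    (∀ y : Fin k × Fin m → F[X], polyVec y ∈ Nl (pencil Xc Yc) →
      polyVec (LvPoly v y) ∈ Nl (matPoly A)) ∧
    (∀ q : Fin m → F[X], polyVec q ∈ Nl (matPoly A) →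
      ∃ y : Fin k × Fin m → F[X],
        polyVec y ∈ Nl (pencil Xc Yc) ∧ LvPoly v y = q ∧ polyVecDeg y = polyVecDeg q) := by
  obtain ⟨M, α, -, hα, hMv, hrank⟩ := hZ
  obtain ⟨k, rfl⟩ : ∃ k', k = k' + 1 := ⟨k - 1, by omega⟩
  obtain ⟨B, hB⟩ := exists_mul_eq_one_of_rank_eq_card (lowerLeftBlock (kronId (m := m) M * Yc))
    (by rw [Fintype.card_prod, Fintype.card_fin, Fintype.card_fin]; exact hrank)
  have hpoly : ∀ q, polyVec q ∈ Nl (matPoly A) → ∃ y, polyVec y ∈ Nl (pencil Xc Yc) ∧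
      LvPoly v y = q ∧ polyVecDeg y ≤ polyVecDeg q := fun q hq => by
    simp only [polyVec_mem_Nl_iff] at hq ⊢
    exact exists_left_null_preimage hL hα hMv hB hq
  have hmaps : ∀ x ∈ Nl (pencil Xc Yc), vproj v *ᵥ x ∈ Nl (matPoly A) :=
    fun _ hx => vproj_mulVec_mem_Nl hL hx
  refine ⟨⟨(vproj v).mulVecLin.restrict hmaps, surjective_restrict_of_polyVec _ hmaps
    fun q hq => ?_, fun _ => rfl⟩, fun y hy => ?_, fun q hq => ?_⟩
  · obtain ⟨y, hy, hLv, -⟩ := hpoly q hq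
    exact ⟨y, hy, by rw [mulVecLin_apply, vproj_mulVec_polyVec, hLv]⟩
  · exact vproj_mulVec_polyVec v y ▸ hmaps _ hy
  · obtain ⟨y, hy, hLv, hdeg⟩ := hpoly q hq
    exact ⟨y, hy, hLv, hdeg.antisymm (hLv ▸ polyVecDeg_LvPoly_le v y)⟩

/-- For `m ≥ n` and `L ∈ 𝕃₁(P)` of full `Z`-rank with nonzero right
ansatz vector `v`, the map `𝓛_v : N_l(L) → N_l(P)`, `y(λ) ↦ (vᵀ ⊗ I_m) y(λ)` is a
surjective `F(λ)`-linear map; it maps the vector polynomials in `N_l(L)` onto the vector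
polynomials in `N_l(P)`, and every vector polynomial `q(λ) ∈ N_l(P)` of degree `δ` has a
preimage in `N_l(L)` which is a vector polynomial of degree exactly `δ`. -/
theorem statement_9 {F : Type*} [RCLike F] {k m n : ℕ} (hk : 0 < k) (hmn : n ≤ m)
    (A : Fin (k + 1) → Matrix (Fin m) (Fin n) F)
    (Xc Yc : Matrix (Fin k × Fin m) (Fin k × Fin n) F)
    (v : Fin k → F) (hv : v ≠ 0)
    (hL : RightAnsatz (matPoly A) (pencil Xc Yc) v)
    (hZ : FullZrank1 Yc v) :
    (∃ φ : Nl (pencil Xc Yc) →ₗ[RatFunc F] Nl (matPoly A),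
      Function.Surjective φ ∧
        ∀ y : Nl (pencil Xc Yc),
          (φ y : Fin m → RatFunc F) =
            (vproj v).mulVec (y : Fin k × Fin m → RatFunc F)) ∧
    (∀ y : Fin k × Fin m → F[X], polyVec y ∈ Nl (pencil Xc Yc) →
      polyVec (LvPoly v y) ∈ Nl (matPoly A)) ∧
    (∀ q : Fin m → F[X], polyVec q ∈ Nl (matPoly A) →
      ∃ y : Fin k × Fin m → F[X],
        polyVec y ∈ Nl (pencil Xc Yc) ∧ LvPoly v y = q ∧ polyVecDeg y = polyVecDeg q) :=
  statement_9_general hk A Xc Yc v hL hZ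
end GLin
end
end
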